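/- The Gaussian binomial coefficient evaluated at q = −1 satisfies: [2n choose 2k+1]_{q=−1} = 0, and in all other cases [n choose k]_{q=−1} = C(⌊n/2⌋, ⌊k/2⌋). -/

import Mathlib

def inversions {n : ℕ} (w : Fin n → Bool) : ℕ :=
  (Finset.univ.filter
    (fun p : Fin n × Fin n => p.1 < p.2 ∧ w p.1 = true ∧ w p.2 = false)).card

def words (n k : ℕ) : Finset (Fin n → Bool) :=
  Finset.univ.filter (fun w => (Finset.univ.filter (fun i => w i = true)).card = k)

noncomputable def gaussBinom (n k : ℕ) : Polynomial ℤ :=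
  ∑ w ∈ words n k, Polynomial.X ^ inversions w

/-!
Splitting a word by its last letter gives the q-Pascal rule
`[n+1, k+1] = [n, k] + q^(k+1) [n, k+1]`. At `q = -1` the sign `(-1)^(k+1)` alternates, so in
an even row `2m` the odd entries cancel, and two consecutive steps of the recurrence (through
the odd row `2m+1`, whose entries are `C(m, ⌊k/2⌋)`) reproduce Pascal's rule
`C(m+1, j+1) = C(m, j) + C(m, j+1)`.
-/

open Finset Polynomial

lemma card_filter_snoc_eq_true {n : ℕ} (v : Fin n → Bool) (b : Bool) :
    #{i | (Fin.snoc v b : Fin (n + 1) → Bool) i = true} = #{i | v i = true} + b.toNat := by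
  rw [card_filter, card_filter, Fin.sum_univ_castSucc]
  cases b <;> simp

lemma inversions_snoc {n : ℕ} (v : Fin n → Bool) (b : Bool) :
    inversions (Fin.snoc v b : Fin (n + 1) → Bool)
      = inversions v + if b then 0 else #{i | v i = true} := by
  simp only [inversions, card_filter, Fintype.sum_prod_type, Fin.sum_univ_castSucc,
    Fin.snoc_castSucc, Fin.snoc_last, Fin.castSucc_lt_castSucc_iff, Fin.castSucc_lt_last]
  cases b <;> simp [Fin.not_lt.mpr (Fin.le_last _), sum_add_distrib]

lemma sum_fun_fin_succ_bool {M : Type*} [AddCommMonoid M] (n : ℕ)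
    (f : (Fin (n + 1) → Bool) → M) :
    ∑ w, f w = ∑ v : Fin n → Bool, (f (Fin.snoc v true) + f (Fin.snoc v false)) := by
  rw [← (Fin.snocEquiv fun _ => Bool).sum_comp, Fintype.sum_prod_type, Fintype.sum_bool,
    ← sum_add_distrib]
  rfl

lemma gaussBinom_succ_succ (n k : ℕ) :
    gaussBinom (n + 1) (k + 1) = gaussBinom n k + X ^ (k + 1) * gaussBinom n (k + 1) := by
  simp only [gaussBinom, words, sum_filter, sum_fun_fin_succ_bool, card_filter_snoc_eq_true,
    inversions_snoc, mul_sum, ← sum_add_distrib]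
  refine sum_congr rfl fun v _ => ?_
  by_cases h : #{i | v i = true} = k + 1 <;> simp [h, pow_add, mul_comm]

lemma gaussBinom_zero_right (n : ℕ) : gaussBinom n 0 = 1 := by
  have hwords : words n 0 = {fun _ => false} := by
    ext w
    simp [words, filter_eq_empty_iff, funext_iff]
  simp [gaussBinom, hwords, inversions]

lemma gaussBinom_eq_zero_of_lt {n k : ℕ} (h : n < k) : gaussBinom n k = 0 := by
  refine sum_eq_zero fun w hw => absurd (mem_filter.mp hw).2 ?_
  have := card_filter_le univ fun i => w i = true
  rw [card_univ, Fintype.card_fin] at this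
  omega

lemma gaussBinom_eval_neg_one_succ_succ (n k : ℕ) :
    (gaussBinom (n + 1) (k + 1)).eval (-1)
      = (gaussBinom n k).eval (-1) + (-1) ^ (k + 1) * (gaussBinom n (k + 1)).eval (-1) := by
  simp [gaussBinom_succ_succ]

lemma gaussBinom_eval_neg_one_odd {m : ℕ}
    (h_odd : ∀ j, (gaussBinom (2 * m) (2 * j + 1)).eval (-1) = 0)
    (h_even : ∀ j, (gaussBinom (2 * m) (2 * j)).eval (-1) = (m.choose j : ℤ)) (k : ℕ) :
    (gaussBinom (2 * m + 1) k).eval (-1) = (m.choose (k / 2) : ℤ) := by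
  obtain ⟨j, rfl | rfl⟩ : ∃ j, k = 2 * j ∨ k = 2 * j + 1 := ⟨k / 2, by omega⟩
  · cases j with
    | zero => simp [gaussBinom_zero_right]
    | succ j =>
      rw [show 2 * (j + 1) = 2 * j + 1 + 1 by ring, gaussBinom_eval_neg_one_succ_succ, h_odd,
        show 2 * j + 1 + 1 = 2 * (j + 1) by ring, h_even, Even.neg_one_pow ⟨j + 1, by ring⟩]
      simp
  · rw [gaussBinom_eval_neg_one_succ_succ, h_even, h_odd]
    simp [Nat.mul_add_div]

lemma gaussBinom_eval_neg_one_even (m : ℕ) :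
    (∀ j, (gaussBinom (2 * m) (2 * j + 1)).eval (-1) = 0) ∧
      ∀ j, (gaussBinom (2 * m) (2 * j)).eval (-1) = (m.choose j : ℤ) := by
  induction m with
  | zero =>
    refine ⟨fun j => by simp [gaussBinom_eq_zero_of_lt], fun j => ?_⟩
    cases j with
    | zero => simp [gaussBinom_zero_right]
    | succ j => simp [gaussBinom_eq_zero_of_lt]
  | succ m ih =>
    have h_odd := gaussBinom_eval_neg_one_odd ih.1 ih.2
    rw [show 2 * (m + 1) = 2 * m + 1 + 1 by ring]
    refine ⟨fun j => ?_, fun j => ?_⟩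
    · rw [gaussBinom_eval_neg_one_succ_succ, h_odd, h_odd, Odd.neg_one_pow ⟨j, by ring⟩]
      simp [Nat.mul_add_div]
    · cases j with
      | zero => simp [gaussBinom_zero_right]
      | succ j =>
        rw [show 2 * (j + 1) = 2 * j + 1 + 1 by ring, gaussBinom_eval_neg_one_succ_succ, h_odd,
          h_odd, Even.neg_one_pow ⟨j + 1, by ring⟩, Nat.choose_succ_succ]
        rw [show (2 * j + 1) / 2 = j by omega, show (2 * j + 1 + 1) / 2 = j + 1 by omega]
        push_cast
        ring

theorem stmt_17 :
    (∀ n k : ℕ, (gaussBinom (2 * n) (2 * k + 1)).eval (-1) = 0) ∧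
    (∀ n k : ℕ, Odd n ∨ Even k →
      (gaussBinom n k).eval (-1) = ((n / 2).choose (k / 2) : ℤ)) := by
  refine ⟨fun n => (gaussBinom_eval_neg_one_even n).1, fun n k h => ?_⟩
  obtain ⟨m, rfl | rfl⟩ : ∃ m, n = 2 * m ∨ n = 2 * m + 1 := ⟨n / 2, by omega⟩
  · obtain ⟨j, rfl⟩ : ∃ j, k = 2 * j := by
      rcases h with h | ⟨j, rfl⟩
      · exact (Nat.not_odd_iff_even.mpr (even_two_mul m) h).elim
      · exact ⟨j, by ring⟩
    simpa using (gaussBinom_eval_neg_one_even m).2 j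
  · have ⟨h_odd, h_even⟩ := gaussBinom_eval_neg_one_even m
    simpa [Nat.mul_add_div] using gaussBinom_eval_neg_one_odd h_odd h_even k
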